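/- arXiv:1405.7954 — 5 statements merged into one kernel-verified Lean document; each statement's English description precedes it below -/
import Mathlib

section
/- Let P be a d-dimensional perfect prismatoid in ℝ^d with facets F_1, ..., F_N, where for each i the facet F_i lies in the hyperplane {x : ⟨a_i, x⟩ = b_i} and P is contained in the half-space {x : ⟨a_i, x⟩ ≤ b_i}. Then there exist real numbers c_1, ..., c_N with c_i < b_i for all i such that P = {x ∈ ℝ^d : c_i ≤ ⟨a_i, x⟩ ≤ b_i for all i = 1, ..., N}, and for every vertex v of P and every i = 1, ..., N either ⟨a_i, v⟩ = b_i or ⟨a_i, v⟩ = c_i. -/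
/-!
Each facet `F i` has a parallel face `F' i` on which `⟪a i, ·⟫` is constant, say equal to `c i`,
so `P = conv (F i ∪ F' i)` lies in the slab `c i ≤ ⟪a i, ·⟫ ≤ b i` and every vertex of `P` lies in
`F i ∪ F' i`; an interior point of `P` forces `c i < b i`. The reverse inclusion is the facet
description of a full-dimensional polytope: for `x ∉ P`, walk from a generic interior point `p`
towards `x`. Where the segment leaves `P` it meets a supporting hyperplane, genericity of `p`
makes the exposed face cut out by that hyperplane a facet, and `x` violates its inequality.
-/

open scoped RealInnerProductSpace

/-- A polytope is the convex hull of a finite set of points. -/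
def IsPolytope {d : ℕ} (P : Set (EuclideanSpace ℝ (Fin d))) : Prop :=
  ∃ S : Finset (EuclideanSpace ℝ (Fin d)),
    P = convexHull ℝ (S : Set (EuclideanSpace ℝ (Fin d)))

/-- A facet of a `d`-dimensional polytope is a `(d-1)`-dimensional exposed face. -/
def IsFacet {d : ℕ} (P F : Set (EuclideanSpace ℝ (Fin d))) : Prop :=
  IsExposed ℝ P F ∧ Module.finrank ℝ (vectorSpan ℝ F) = d - 1

/-- A `d`-dimensional polytope `P` in `ℝ^d` is a perfect prismatoid if for every facet `F`
there is a (nonempty exposed) face `F'` parallel to `F` (i.e. `lin F' ⊆ lin F`) such that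
`P = conv (F ∪ F')`. -/
def IsPerfectPrismatoid {d : ℕ} (P : Set (EuclideanSpace ℝ (Fin d))) : Prop :=
  IsPolytope P ∧ affineSpan ℝ P = ⊤ ∧
  ∀ F : Set (EuclideanSpace ℝ (Fin d)), IsFacet P F →
    ∃ F' : Set (EuclideanSpace ℝ (Fin d)), IsExposed ℝ P F' ∧ F'.Nonempty ∧
      vectorSpan ℝ F' ≤ vectorSpan ℝ F ∧ P = convexHull ℝ (F ∪ F')

theorem vectorSpan_le_ker_of_subset_preimage {k E F : Type*} [Ring k] [AddCommGroup E]
    [Module k E] [AddCommGroup F] [Module k F] (f : E →ₗ[k] F) {s : Set E} {r : F}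
    (h : s ⊆ f ⁻¹' {r}) : vectorSpan k s ≤ LinearMap.ker f := by
  rw [vectorSpan_def, Submodule.span_le]
  rintro _ ⟨p, hp, q, hq, rfl⟩
  simp only [SetLike.mem_coe, LinearMap.mem_ker, vsub_eq_sub, map_sub]
  rw [show f p = r from h hp, show f q = r from h hq, sub_self]

theorem mem_convexHull_setOf_eq_of_forall_le {𝕜 E : Type*} [Field 𝕜] [LinearOrder 𝕜]
    [IsStrictOrderedRing 𝕜] [AddCommGroup E] [Module 𝕜 E] (f : E →ₗ[𝕜] 𝕜) {S : Set E} {z : E}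
    (hz : z ∈ convexHull 𝕜 S) (hle : ∀ s ∈ S, f s ≤ f z) :
    z ∈ convexHull 𝕜 {s ∈ S | f s = f z} := by
  classical
  rw [convexHull_eq] at hz
  obtain ⟨ι, t, w, y, hw₀, hw₁, hyS, hz⟩ := hz
  have hgap : ∑ i ∈ t, w i * (f z - f (y i)) = 0 := by
    simp only [mul_sub, Finset.sum_sub_distrib, ← Finset.sum_mul, hw₁, one_mul, ← hz,
      Finset.centerMass_eq_of_sum_1 _ _ hw₁, map_sum, map_smul, smul_eq_mul, sub_self]
  rw [Finset.sum_eq_zero_iff_of_nonneg fun i hi =>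
    mul_nonneg (hw₀ i hi) (sub_nonneg.2 (hle _ (hyS i hi)))] at hgap
  have hmem := (t.filter (w · ≠ 0)).centerMass_mem_convexHull (s := {s ∈ S | f s = f z})
    (fun i hi => hw₀ i (Finset.mem_filter.1 hi).1)
    (by rw [Finset.sum_filter_ne_zero, hw₁]; exact one_pos)
    (fun i hi => ⟨hyS i (Finset.mem_filter.1 hi).1, (sub_eq_zero.1 ((mul_eq_zero.1
      (hgap i (Finset.mem_filter.1 hi).1)).resolve_left (Finset.mem_filter.1 hi).2)).symm⟩)
  rwa [Finset.centerMass_filter_ne_zero, hz] at hmem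

theorem inner_lt_of_mem_interior {E : Type*} [NormedAddCommGroup E] [InnerProductSpace ℝ E]
    {P : Set E} {a : E} {b : ℝ} (ha : a ≠ 0) (hP : P ⊆ {x | ⟪a, x⟫ ≤ b}) {p : E}
    (hp : p ∈ interior P) : ⟪a, p⟫ < b := by
  have hf : innerSL ℝ a ≠ 0 := fun h =>
    ha (norm_eq_zero.1 (by simpa [h] using (innerSL_apply_norm ℝ a).symm))
  have himage : innerSL ℝ a '' interior P ⊆ interior (Set.Iic b) :=
    interior_maximal (Set.image_subset_iff.2 fun x hx => hP (interior_subset hx))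
      ((innerSL ℝ a).isOpenMap_of_ne_zero hf _ isOpen_interior)
  rw [interior_Iic] at himage
  exact himage ⟨p, hp, rfl⟩

theorem LinearMap.apply_lt_of_mem_segment {𝕜 E : Type*} [Field 𝕜] [LinearOrder 𝕜]
    [IsStrictOrderedRing 𝕜] [AddCommGroup E] [Module 𝕜 E] (f : E →ₗ[𝕜] 𝕜) {p x z : E} {b : 𝕜}
    (hp : f p < b) (hx : f x ≤ b) (hz : z ∈ segment 𝕜 p x) (hzx : z ≠ x) : f z < b := by
  obtain ⟨s, t, hs, ht, hst, rfl⟩ := hz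
  have hs₀ : 0 < s := by
    refine lt_of_le_of_ne hs fun h => hzx ?_
    simp [← h, show t = 1 by linarith]
  simp only [map_add, map_smul, smul_eq_mul]
  calc s * f p + t * f x < s * b + t * b :=
        add_lt_add_of_lt_of_le (mul_lt_mul_of_pos_left hp hs₀) (mul_le_mul_of_nonneg_left hx ht)
    _ = b := by rw [← add_mul, hst, one_mul]

theorem IsOpen.exists_mem_forall_notMem_of_ne_top {E : Type*} [NormedAddCommGroup E]
    [NormedSpace ℝ E] [FiniteDimensional ℝ E] {U : Set E} (hU : IsOpen U) (hne : U.Nonempty)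
    {𝒜 : Set (AffineSubspace ℝ E)} (h𝒜 : 𝒜.Finite) (htop : ⊤ ∉ 𝒜) :
    ∃ p ∈ U, ∀ A ∈ 𝒜, p ∉ A := by
  borelize E
  let μ : MeasureTheory.Measure E := MeasureTheory.Measure.addHaar
  have hnull : μ (⋃ A ∈ 𝒜, (A : Set E)) = 0 :=
    (MeasureTheory.measure_biUnion_null_iff h𝒜.countable).2 fun A hA =>
      μ.addHaar_affineSubspace A (ne_of_mem_of_not_mem hA htop)
  obtain ⟨p, hpU, hp⟩ := MeasureTheory.nonempty_of_measure_ne_zero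
    (μ := μ) (s := U \ ⋃ A ∈ 𝒜, (A : Set E))
    (by rw [MeasureTheory.measure_sdiff_null hnull]; exact (hU.measure_pos μ hne).ne')
  exact ⟨p, hpU, fun A hA hpA => hp (Set.mem_biUnion hA hpA)⟩

theorem exists_mem_segment_notMem_interior {E : Type*} [AddCommGroup E] [Module ℝ E]
    [TopologicalSpace E] [ContinuousAdd E] [ContinuousSMul ℝ E] {P : Set E} (hP : IsClosed P)
    {p x : E} (hp : p ∈ interior P) (hx : x ∉ P) :
    ∃ z ∈ segment ℝ p x, z ∈ P ∧ z ∉ interior P := by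
  by_contra! h
  obtain ⟨w, -, hwint, hwP⟩ := (convex_segment p x).isPreconnected _ _ isOpen_interior
    hP.isOpen_compl (fun z hz => (em (z ∈ P)).imp (h z hz) id)
    ⟨p, left_mem_segment ℝ p x, hp⟩ ⟨x, right_mem_segment ℝ p x, hx⟩
  exact hwP (interior_subset hwint)

theorem Convex.exists_forall_le_of_notMem_interior {E : Type*} [AddCommGroup E] [Module ℝ E]
    [TopologicalSpace E] [IsTopologicalAddGroup E] [ContinuousSMul ℝ E] [LocallyConvexSpace ℝ E]
    {P : Set E} (hP : Convex ℝ P) {p z : E} (hp : p ∈ interior P) (hz : z ∉ interior P) :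
    ∃ f : StrongDual ℝ E, f p < f z ∧ ∀ y ∈ P, f y ≤ f z := by
  obtain ⟨f, hf⟩ := geometric_hahn_banach_open_point hP.interior isOpen_interior hz
  refine ⟨f, hf p hp, fun y hy => ?_⟩
  have hclosure : closure (interior P) ⊆ {y | f y ≤ f z} :=
    closure_minimal (fun y hy => (hf y hy).le) (isClosed_le f.continuous continuous_const)
  rw [hP.closure_interior_eq_closure_of_nonempty_interior ⟨p, hp⟩] at hclosure
  exact hclosure (subset_closure hy)

theorem isFacet_toExposed {d : ℕ} {P T : Set (EuclideanSpace ℝ (Fin d))}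
    {f : StrongDual ℝ (EuclideanSpace ℝ (Fin d))} (hf : f ≠ 0) {x z : EuclideanSpace ℝ (Fin d)}
    (hz : z ∈ f.toExposed P) (hT : T ⊆ f.toExposed P)
    (hspan : affineSpan ℝ (insert x T) = ⊤) : IsFacet P (f.toExposed P) := by
  refine ⟨ContinuousLinearMap.toExposed.isExposed, le_antisymm ?_ ?_⟩
  · have hker : vectorSpan ℝ (f.toExposed P) ≤ LinearMap.ker f.toLinearMap :=
      vectorSpan_le_ker_of_subset_preimage _ (r := f z) fun y hy =>
        le_antisymm (hz.2 y hy.1) (hy.2 z hz.1)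
    have hker_ne : LinearMap.ker f.toLinearMap ≠ ⊤ := fun h =>
      hf (ContinuousLinearMap.coe_injective (LinearMap.ker_eq_top.1 h))
    have := (Submodule.finrank_mono hker).trans_lt (Submodule.finrank_lt hker_ne)
    rw [finrank_euclideanSpace_fin] at this
    omega
  · have hfull : Module.finrank ℝ (vectorSpan ℝ (insert x T)) = d := by
      rw [(AffineSubspace.affineSpan_eq_top_iff_vectorSpan_eq_top_of_nonempty ℝ _ _
        (Set.insert_nonempty x T)).1 hspan, finrank_top, finrank_euclideanSpace_fin]
    have := finrank_vectorSpan_insert_le_set ℝ T x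
    have := Submodule.finrank_mono (vectorSpan_mono ℝ hT)
    omega

theorem IsPolytope.convex {d : ℕ} {P : Set (EuclideanSpace ℝ (Fin d))} (hP : IsPolytope P) :
    Convex ℝ P := by
  obtain ⟨S, rfl⟩ := hP
  exact convex_convexHull ℝ _

theorem IsPolytope.setOf_forall_inner_le_subset {d : ℕ} {P : Set (EuclideanSpace ℝ (Fin d))}
    (hpoly : IsPolytope P) (hspan : affineSpan ℝ P = ⊤) {ι : Type*}
    (a : ι → EuclideanSpace ℝ (Fin d)) (b : ι → ℝ) (ha : ∀ i, a i ≠ 0)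
    (hPhalf : ∀ i, P ⊆ {x | ⟪a i, x⟫ ≤ b i})
    (hfacet : ∀ G, IsFacet P G → ∃ i, G ⊆ {x | ⟪a i, x⟫ = b i}) :
    {x | ∀ i, ⟪a i, x⟫ ≤ b i} ⊆ P := by
  obtain ⟨S, rfl⟩ := hpoly
  intro x hx
  by_contra hxP
  -- `p` avoids every proper affine span of `x` together with points of `S`.
  obtain ⟨p, hp, hpgen⟩ := isOpen_interior.exists_mem_forall_notMem_of_ne_top
    ((convex_convexHull ℝ _).interior_nonempty_iff_affineSpan_eq_top.2 hspan)
    ((S.finite_toSet.finite_subsets.image fun T => affineSpan ℝ (insert x T)).sdiff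
      (t := {⊤})) fun h => h.2 rfl
  obtain ⟨z, hzseg, hzP, hzint⟩ := exists_mem_segment_notMem_interior
    (S.finite_toSet.isCompact_convexHull (𝕜 := ℝ)).isClosed hp hxP
  obtain ⟨f, hfpz, hfmax⟩ := (convex_convexHull ℝ _).exists_forall_le_of_notMem_interior hp hzint
  have hxz : x ≠ z := fun h => hxP (h ▸ hzP)
  set T : Set (EuclideanSpace ℝ (Fin d)) := {s ∈ (S : Set _) | f s = f z}
  have hzT : z ∈ convexHull ℝ T := mem_convexHull_setOf_eq_of_forall_le (f : _ →ₗ[ℝ] ℝ) hzP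
    fun s hs => hfmax s (subset_convexHull ℝ _ hs)
  have hspanT : affineSpan ℝ (insert x T) = ⊤ := by
    by_contra hne
    refine hpgen _ ⟨⟨T, fun s hs => hs.1, rfl⟩, hne⟩ ?_
    have hzspan : z ∈ affineSpan ℝ (insert x T) :=
      affineSpan_mono ℝ (Set.subset_insert x T) (convexHull_subset_affineSpan T hzT)
    exact affineSpan_pair_le_of_mem_of_mem (mem_affineSpan ℝ (Set.mem_insert x T)) hzspan
      ((mem_segment_iff_wbtw.1 hzseg).left_mem_affineSpan_of_right_ne hxz)
  have hzface : z ∈ f.toExposed (convexHull ℝ S) := ⟨hzP, hfmax⟩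
  obtain ⟨i, hi⟩ := hfacet _ <| isFacet_toExposed (fun h => by simp [h] at hfpz) hzface
    (fun s (hs : s ∈ T) => ⟨subset_convexHull ℝ _ hs.1, fun y hy => hs.2 ▸ hfmax y hy⟩) hspanT
  exact ((innerₛₗ ℝ (a i)).apply_lt_of_mem_segment (inner_lt_of_mem_interior (ha i) (hPhalf i) hp)
    (hx i) hzseg hxz.symm).ne (hi hzface)

/-- A perfect prismatoid with facets `F i ⊆ {x | ⟪a i, x⟫ = b i}` can be
written as `{x | ∀ i, c i ≤ ⟪a i, x⟫ ≤ b i}` with `c i < b i`, and every vertex `v`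
satisfies `⟪a i, v⟫ ∈ {b i, c i}` for every `i`. -/
theorem perfect_prismatoid_description {d N : ℕ}
    (P : Set (EuclideanSpace ℝ (Fin d))) (hP : IsPerfectPrismatoid P)
    (F : Fin N → Set (EuclideanSpace ℝ (Fin d)))
    (a : Fin N → EuclideanSpace ℝ (Fin d)) (b : Fin N → ℝ)
    (ha : ∀ i, a i ≠ 0)
    (hF : ∀ i, IsFacet P (F i))
    (hFhyp : ∀ i, F i ⊆ {x | ⟪a i, x⟫ = b i})
    (hPhalf : ∀ i, P ⊆ {x | ⟪a i, x⟫ ≤ b i})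
    (hall : ∀ G : Set (EuclideanSpace ℝ (Fin d)), IsFacet P G → ∃ i, G = F i) :
    ∃ c : Fin N → ℝ, (∀ i, c i < b i) ∧
      P = {x | ∀ i, c i ≤ ⟪a i, x⟫ ∧ ⟪a i, x⟫ ≤ b i} ∧
      ∀ v ∈ Set.extremePoints ℝ P, ∀ i, ⟪a i, v⟫ = b i ∨ ⟪a i, v⟫ = c i := by
  obtain ⟨hpoly, hspan, hpris⟩ := hP
  choose F' hF'exp hF'ne hF'par hconv using fun i => hpris (F i) (hF i)
  choose y hy using hF'ne
  set c : Fin N → ℝ := fun i => ⟪a i, y i⟫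
  have hF'level : ∀ i, F' i ⊆ {x | ⟪a i, x⟫ = c i} := fun i w hw => by
    have := vectorSpan_le_ker_of_subset_preimage (innerₛₗ ℝ (a i)) (hFhyp i)
      (hF'par i (vsub_mem_vectorSpan ℝ hw (hy i)))
    simpa [c, sub_eq_zero, inner_sub_right] using this
  have hcb : ∀ i, c i ≤ b i := fun i => hPhalf i ((hF'exp i).subset (hy i))
  have hslab : ∀ i, P ⊆ {x | c i ≤ ⟪a i, x⟫ ∧ ⟪a i, x⟫ ≤ b i} := fun i => by
    rw [hconv i]
    refine convexHull_min ?_ ((convex_Icc (c i) (b i)).linear_preimage (innerₛₗ ℝ (a i)))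
    rintro w (hw | hw)
    · exact ⟨(hFhyp i hw).symm ▸ hcb i, (hFhyp i hw).le⟩
    · exact ⟨(hF'level i hw).ge, (hF'level i hw) ▸ hcb i⟩
  obtain ⟨p, hp⟩ := hpoly.convex.interior_nonempty_iff_affineSpan_eq_top.2 hspan
  refine ⟨c, fun i => (hslab i (interior_subset hp)).1.trans_lt
    (inner_lt_of_mem_interior (ha i) (hPhalf i) hp), ?_, ?_⟩
  · refine Set.Subset.antisymm (fun x hx i => hslab i hx) fun x hx => ?_
    exact hpoly.setOf_forall_inner_le_subset hspan a b ha hPhalf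
      (fun G hG => (hall G hG).imp fun i (hi : G = F i) => hi ▸ hFhyp i) fun i => (hx i).2
  · intro v hv i
    rw [hconv i] at hv
    exact (extremePoints_convexHull_subset hv).imp (hFhyp i ·) (hF'level i ·)
end

section
/- Every d-dimensional perfect prismatoid in ℝ^d is affinely equivalent to a 0/1-polytope, i.e., there exists an affine bijection T : ℝ^d → ℝ^d such that T(P) is the convex hull of a subset of {0,1}^d. -/
/-!
The facet normals of a full-dimensional polytope `P = conv S` span `ℝ^d`. Indeed, given `v ≠ 0`,
start from the normal `u = v`. As long as the face `F` of `P` on which `⟪u, ·⟫` is maximal has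
dimension less than `d - 1`, there is `m ≠ 0` orthogonal both to `v` and to the direction of `F`,
and tilting `u` to `u + t • m` for the right `t` enlarges `F` by a vertex off its affine hull.
The process ends at a facet whose normal `w` still satisfies `⟪w, v⟫ = ⟪v, v⟫ > 0`, so `v` is
not orthogonal to all facet normals.

Choose `d` linearly independent facet normals `u i`, with facets `F i ⊆ {⟪u i, ·⟫ = b i}`. The
face `F' i` parallel to `F i` lies in a hyperplane `⟪u i, ·⟫ = c i`, and `c i ≠ b i` because
`P = conv (F i ∪ F' i)` is full-dimensional. Every vertex of `P` lies in `F i ∪ F' i`, so the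
affine coordinates `x ↦ (⟪u i, x⟫ - b i) / (c i - b i)` map the vertices of `P` into `{0,1}^d`.
-/

open scoped RealInnerProductSpace

open Module

theorem convexHull_extremePoints_convexHull_of_finite {E : Type*} [AddCommGroup E] [Module ℝ E]
    [TopologicalSpace E] [T2Space E] [IsTopologicalAddGroup E] [ContinuousSMul ℝ E]
    [LocallyConvexSpace ℝ E] {s : Set E} (hs : s.Finite) :
    convexHull ℝ ((convexHull ℝ s).extremePoints ℝ) = convexHull ℝ s := by
  have hext : ((convexHull ℝ s).extremePoints ℝ).Finite := hs.subset extremePoints_convexHull_subset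
  rw [← (hext.isCompact_convexHull ℝ).isClosed.closure_eq]
  exact closure_convexHull_extremePoints (hs.isCompact_convexHull ℝ) (convex_convexHull ℝ s)

section InnerProductSpace

variable {E : Type*} [NormedAddCommGroup E] [InnerProductSpace ℝ E]

theorem mem_orthogonal_vectorSpan_iff {A : Set E} {m : E} :
    m ∈ (vectorSpan ℝ A)ᗮ ↔ ∀ x ∈ A, ∀ y ∈ A, ⟪m, x⟫ = ⟪m, y⟫ := by
  refine ⟨fun hm x hx y hy => ?_, fun h => (Submodule.mem_orthogonal' _ m).2 fun z hz => ?_⟩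
  · have := Submodule.inner_left_of_mem_orthogonal (vsub_mem_vectorSpan ℝ hx hy) hm
    rwa [vsub_eq_sub, inner_sub_right, sub_eq_zero] at this
  · refine (Submodule.span_le (p := LinearMap.ker (innerₛₗ ℝ m))).2 ?_ hz
    rintro _ ⟨x, hx, y, hy, rfl⟩
    simp [inner_sub_right, h x hx y hy]

theorem eq_zero_of_mem_orthogonal_vectorSpan {A : Set E} (hA : affineSpan ℝ A = ⊤) {m : E}
    (hm : m ∈ (vectorSpan ℝ A)ᗮ) : m = 0 := by
  rwa [AffineSubspace.vectorSpan_eq_top_of_affineSpan_eq_top ℝ E E hA,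
    Submodule.top_orthogonal_eq_bot, Submodule.mem_bot] at hm

theorem exists_ne_forall_inner_eq_or_eq {F F' : Set E} {u : E} (hu : u ≠ 0)
    (hspan : affineSpan ℝ (F ∪ F') = ⊤) (hF : F.Nonempty) (hF' : F'.Nonempty)
    (huF : u ∈ (vectorSpan ℝ F)ᗮ) (hpar : vectorSpan ℝ F' ≤ vectorSpan ℝ F) :
    ∃ b c : ℝ, b ≠ c ∧ ∀ x ∈ F ∪ F', ⟪u, x⟫ = b ∨ ⟪u, x⟫ = c := by
  obtain ⟨x₀, hx₀⟩ := hF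
  obtain ⟨y₀, hy₀⟩ := hF'
  have hval : ∀ x ∈ F ∪ F', ⟪u, x⟫ = ⟪u, x₀⟫ ∨ ⟪u, x⟫ = ⟪u, y₀⟫ := by
    rintro x (hx | hx)
    · exact .inl (mem_orthogonal_vectorSpan_iff.1 huF x hx x₀ hx₀)
    · exact .inr (mem_orthogonal_vectorSpan_iff.1 (Submodule.orthogonal_le hpar huF) x hx y₀ hy₀)
  refine ⟨_, _, fun hbc => hu (eq_zero_of_mem_orthogonal_vectorSpan hspan ?_), hval⟩
  refine mem_orthogonal_vectorSpan_iff.2 fun x hx y hy => ?_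
  rcases hval x hx with h | h <;> rcases hval y hy with h' | h' <;> simp only [h, h', hbc]

theorem Module.Basis.exists_affineEquiv_euclideanSpace {ι : Type*} [Fintype ι]
    (u : Basis ι ℝ E) {b c : ι → ℝ} (hbc : ∀ i, b i ≠ c i) :
    ∃ T : E ≃ᵃ[ℝ] EuclideanSpace ℝ ι, ∀ x i, T x i = (⟪u i, x⟫ - b i) / (c i - b i) := by
  have : FiniteDimensional ℝ E := Module.Finite.of_basis u
  let A : E →ₗ[ℝ] EuclideanSpace ℝ ι := (WithLp.linearEquiv 2 ℝ (ι → ℝ)).symm.toLinearMap ∘ₗ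
    LinearMap.pi fun i => (c i - b i)⁻¹ • innerₛₗ ℝ (u i)
  have hA : Function.Injective A := fun x y hxy =>
    InnerProductSpace.ext_inner_left_basis u fun i => by
      simpa [A, sub_ne_zero.2 (hbc i).symm] using congr($hxy i)
  let T₀ := (A.linearEquivOfInjective hA (by simp [finrank_eq_card_basis u])).toAffineEquiv
  refine ⟨T₀.trans (AffineEquiv.constVAdd ℝ _ (WithLp.toLp 2 fun i => -b i / (c i - b i))),
    fun x i => ?_⟩
  simp [T₀, A]
  ring

def exposedFace (P : Set E) (u : E) : Set E :=
  {x ∈ P | ∀ y ∈ P, ⟪u, y⟫ ≤ ⟪u, x⟫}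

theorem isExposed_exposedFace (P : Set E) (u : E) : IsExposed ℝ P (exposedFace P u) :=
  fun _ => ⟨innerSL ℝ u, rfl⟩

theorem exposedFace_nonempty {P : Set E} (hP : IsCompact P) (hne : P.Nonempty) (u : E) :
    (exposedFace P u).Nonempty := by
  obtain ⟨x, hx, hmax⟩ := hP.exists_isMaxOn hne (innerSL ℝ u).continuous.continuousOn
  exact ⟨x, hx, fun y hy => hmax hy⟩

theorem mem_orthogonal_vectorSpan_exposedFace (P : Set E) (u : E) :
    u ∈ (vectorSpan ℝ (exposedFace P u))ᗮ :=
  mem_orthogonal_vectorSpan_iff.2 fun _ hx _ hy => le_antisymm (hy.2 _ hx.1) (hx.2 _ hy.1)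

theorem finrank_vectorSpan_exposedFace_le [FiniteDimensional ℝ E] (P : Set E) {u : E}
    (hu : u ≠ 0) : finrank ℝ (vectorSpan ℝ (exposedFace P u)) ≤ finrank ℝ E - 1 := by
  have hsum := Submodule.finrank_add_finrank_orthogonal (vectorSpan ℝ (exposedFace P u))
  have hpos : (vectorSpan ℝ (exposedFace P u))ᗮ ≠ ⊥ := fun h => hu <| by
    simpa [h] using mem_orthogonal_vectorSpan_exposedFace P u
  have := mt Submodule.finrank_eq_zero.1 hpos
  omega

theorem mem_exposedFace_convexHull {s : Set E} {u x : E} (hx : x ∈ convexHull ℝ s)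
    (hle : ∀ y ∈ s, ⟪u, y⟫ ≤ ⟪u, x⟫) : x ∈ exposedFace (convexHull ℝ s) u :=
  ⟨hx, fun _ hy => convexHull_min hle (convex_halfSpace_le (innerₛₗ ℝ u).isLinear _) hy⟩

variable {S : Finset E} {P : Set E}

/-- Tilt the normal `u` towards `m` just far enough for the supporting hyperplane to reach a
vertex of `S` outside the current face. -/
theorem exists_exposedFace_subset_exposedFace_add_smul (hPS : P = convexHull ℝ ↑S)
    {u m x₀ : E} (hx₀ : x₀ ∈ exposedFace P u) (hm : m ∈ (vectorSpan ℝ (exposedFace P u))ᗮ)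
    (hS : ∃ s ∈ S, ⟪m, x₀⟫ < ⟪m, s⟫) :
    ∃ t : ℝ, exposedFace P u ⊆ exposedFace P (u + t • m) ∧
      ∃ s ∈ exposedFace P (u + t • m), ⟪m, x₀⟫ < ⟪m, s⟫ := by
  classical
  subst hPS
  have hmP := mem_orthogonal_vectorSpan_iff.1 hm
  have hSP : ∀ s ∈ S, s ∈ convexHull ℝ (S : Set E) := fun s hs => subset_convexHull ℝ _ hs
  set V := S.filter fun s => ⟪m, x₀⟫ < ⟪m, s⟫
  have hV : ∀ s ∈ V, s ∈ S ∧ ⟪u, s⟫ < ⟪u, x₀⟫ ∧ ⟪m, x₀⟫ < ⟪m, s⟫ := by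
    intro s hs
    obtain ⟨hsS, hms⟩ := Finset.mem_filter.1 hs
    refine ⟨hsS, (hx₀.2 s (hSP s hsS)).lt_of_ne fun heq => hms.ne' ?_, hms⟩
    exact hmP s ⟨hSP s hsS, fun y hy => heq ▸ hx₀.2 y hy⟩ x₀ hx₀
  let ratio (s : E) : ℝ := (⟪u, x₀⟫ - ⟪u, s⟫) / (⟪m, s⟫ - ⟪m, x₀⟫)
  obtain ⟨s₀, hs₀V, hs₀min⟩ := V.exists_min_image ratio
    (by obtain ⟨s, hs, hlt⟩ := hS; exact ⟨s, Finset.mem_filter.2 ⟨hs, hlt⟩⟩)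
  obtain ⟨hs₀S, hus₀, hms₀⟩ := hV s₀ hs₀V
  set t := ratio s₀
  have ht : 0 ≤ t := div_nonneg (by linarith) (by linarith)
  have hinner (x : E) : ⟪u + t • m, x⟫ = ⟪u, x⟫ + t * ⟪m, x⟫ := by
    rw [inner_add_left, real_inner_smul_left]
  have hbound : ∀ s ∈ S, ⟪u + t • m, s⟫ ≤ ⟪u + t • m, x₀⟫ := by
    intro s hs
    rw [hinner, hinner]
    by_cases hsV : s ∈ V
    · obtain ⟨-, hus, hms⟩ := hV s hsV
      have : t * (⟪m, s⟫ - ⟪m, x₀⟫) ≤ ⟪u, x₀⟫ - ⟪u, s⟫ :=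
        (le_div_iff₀ (by linarith)).1 (hs₀min s hsV)
      linarith
    · have hms : ⟪m, s⟫ ≤ ⟪m, x₀⟫ := not_lt.1 fun h => hsV (Finset.mem_filter.2 ⟨hs, h⟩)
      nlinarith [hx₀.2 s (hSP s hs)]
  refine ⟨t, fun x hx => mem_exposedFace_convexHull hx.1 fun s hs => (hbound s hs).trans_eq ?_,
    s₀, mem_exposedFace_convexHull (hSP s₀ hs₀S) fun s hs => ?_, hms₀⟩
  · rw [hinner, hinner, le_antisymm (hx₀.2 x hx.1) (hx.2 x₀ hx₀.1), hmP x₀ hx₀ x hx]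
  · have : t * (⟪m, s₀⟫ - ⟪m, x₀⟫) = ⟪u, x₀⟫ - ⟪u, s₀⟫ := div_mul_cancel₀ _ (by linarith)
    have := hbound s hs
    rw [hinner, hinner] at this ⊢
    linarith

variable [FiniteDimensional ℝ E]

theorem exists_finrank_vectorSpan_exposedFace_lt (hPS : P = convexHull ℝ ↑S)
    (hP : affineSpan ℝ P = ⊤) (u v : E)
    (hdim : finrank ℝ (vectorSpan ℝ (exposedFace P u)) + 1 < finrank ℝ E) :
    ∃ w, ⟪w, v⟫ = ⟪u, v⟫ ∧
      finrank ℝ (vectorSpan ℝ (exposedFace P u)) < finrank ℝ (vectorSpan ℝ (exposedFace P w)) := by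
  set W := vectorSpan ℝ (exposedFace P u)
  obtain ⟨m, hm, hm0⟩ : ∃ m ∈ (W ⊔ ℝ ∙ v)ᗮ, m ≠ 0 := by
    refine Submodule.exists_mem_ne_zero_of_ne_bot fun h => ?_
    have hle := Submodule.finrank_add_le_finrank_add_finrank W (ℝ ∙ v)
    have hv := finrank_span_le_card (R := ℝ) ({v} : Set E)
    rw [Submodule.orthogonal_eq_bot_iff.1 h, finrank_top] at hle
    simp only [Set.toFinset_singleton, Finset.card_singleton] at hv
    omega
  have hmW : m ∈ Wᗮ := Submodule.orthogonal_le le_sup_left hm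
  have hmv : ⟪m, v⟫ = 0 :=
    Submodule.mem_orthogonal_singleton_iff_inner_left.1 (Submodule.orthogonal_le le_sup_right hm)
  obtain ⟨x₀, hx₀⟩ := exposedFace_nonempty (hPS ▸ S.finite_toSet.isCompact_convexHull ℝ)
    (AffineSubspace.nonempty_of_affineSpan_eq_top ℝ E E hP) u
  obtain ⟨m', hm'W, hm'v, hS⟩ : ∃ m' ∈ Wᗮ, ⟪m', v⟫ = 0 ∧ ∃ s ∈ S, ⟪m', x₀⟫ < ⟪m', s⟫ := by
    obtain ⟨s, hs, hne⟩ : ∃ s ∈ S, ⟪m, s⟫ ≠ ⟪m, x₀⟫ := by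
      by_contra! h
      rw [hPS, affineSpan_convexHull] at hP
      exact hm0 (eq_zero_of_mem_orthogonal_vectorSpan hP
        (mem_orthogonal_vectorSpan_iff.2 fun x hx y hy => (h x hx).trans (h y hy).symm))
    rcases hne.lt_or_gt with hlt | hgt
    · exact ⟨-m, Submodule.neg_mem _ hmW, by simp [hmv], s, hs, by simpa using hlt⟩
    · exact ⟨m, hmW, hmv, s, hs, hgt⟩
  obtain ⟨t, hsub, s, hs, hlt⟩ := exists_exposedFace_subset_exposedFace_add_smul hPS hx₀ hm'W hS
  refine ⟨u + t • m', by rw [inner_add_left, real_inner_smul_left, hm'v, mul_zero, add_zero],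
    Submodule.finrank_lt_finrank_of_lt (SetLike.lt_iff_le_and_exists.2
      ⟨vectorSpan_mono ℝ hsub, s -ᵥ x₀, vsub_mem_vectorSpan ℝ hs (hsub hx₀), fun hmem => ?_⟩)⟩
  have := Submodule.inner_left_of_mem_orthogonal hmem hm'W
  rw [vsub_eq_sub, inner_sub_right] at this
  linarith

theorem exists_inner_eq_finrank_vectorSpan_exposedFace_ge (hPS : P = convexHull ℝ ↑S)
    (hP : affineSpan ℝ P = ⊤) (u v : E) :
    ∃ w, ⟪w, v⟫ = ⟪u, v⟫ ∧ finrank ℝ E ≤ finrank ℝ (vectorSpan ℝ (exposedFace P w)) + 1 := by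
  induction hk : finrank ℝ E - finrank ℝ (vectorSpan ℝ (exposedFace P u))
    using Nat.strong_induction_on generalizing u with
  | _ k ih =>
    by_cases hdim : finrank ℝ E ≤ finrank ℝ (vectorSpan ℝ (exposedFace P u)) + 1
    · exact ⟨u, rfl, hdim⟩
    obtain ⟨w, hwv, hlt⟩ := exists_finrank_vectorSpan_exposedFace_lt hPS hP u v (by omega)
    have := Submodule.finrank_le (vectorSpan ℝ (exposedFace P w))
    obtain ⟨w', hw'v, hw'⟩ := ih _ (by omega) w rfl
    exact ⟨w', hw'v.trans hwv, hw'⟩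

theorem exists_inner_pos_finrank_vectorSpan_exposedFace_eq (hPS : P = convexHull ℝ ↑S)
    (hP : affineSpan ℝ P = ⊤) {v : E} (hv : v ≠ 0) :
    ∃ w, 0 < ⟪w, v⟫ ∧ finrank ℝ (vectorSpan ℝ (exposedFace P w)) = finrank ℝ E - 1 := by
  obtain ⟨w, hwv, hw⟩ := exists_inner_eq_finrank_vectorSpan_exposedFace_ge hPS hP v v
  have hpos : 0 < ⟪w, v⟫ := hwv ▸ real_inner_self_pos.2 hv
  have hw0 : w ≠ 0 := by rintro rfl; simp at hpos
  have := finrank_vectorSpan_exposedFace_le P hw0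
  exact ⟨w, hpos, by omega⟩

theorem span_setOf_finrank_vectorSpan_exposedFace_eq (hPS : P = convexHull ℝ ↑S)
    (hP : affineSpan ℝ P = ⊤) :
    Submodule.span ℝ {w | finrank ℝ (vectorSpan ℝ (exposedFace P w)) = finrank ℝ E - 1} = ⊤ := by
  by_contra h
  obtain ⟨v, hv, hv0⟩ := Submodule.exists_mem_ne_zero_of_ne_bot
    (mt Submodule.orthogonal_eq_bot_iff.1 h)
  obtain ⟨w, hwv, hw⟩ := exists_inner_pos_finrank_vectorSpan_exposedFace_eq hPS hP hv0
  exact hwv.ne' (Submodule.inner_right_of_mem_orthogonal (Submodule.subset_span hw) hv)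

theorem exists_basis_finrank_vectorSpan_exposedFace_eq {ι : Type*} (b : Basis ι ℝ E)
    (hPS : P = convexHull ℝ ↑S) (hP : affineSpan ℝ P = ⊤) :
    ∃ u : Basis ι ℝ E, ∀ i, finrank ℝ (vectorSpan ℝ (exposedFace P (u i))) = finrank ℝ E - 1 := by
  obtain ⟨B, hB, hBspan, hBli⟩ :=
    exists_linearIndependent ℝ {w | finrank ℝ (vectorSpan ℝ (exposedFace P w)) = finrank ℝ E - 1}
  let u := Basis.mk hBli (by
    rw [Subtype.range_coe, hBspan, span_setOf_finrank_vectorSpan_exposedFace_eq hPS hP])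
  exact ⟨u.reindex (u.indexEquiv b), fun i => hB (by simp [u])⟩

end InnerProductSpace

/-- **Theorem 1.** Every `d`-dimensional perfect prismatoid in `ℝ^d` is
affinely equivalent to a 0/1-polytope: there is an affine bijection `T` of `ℝ^d` such that
`T(P)` is the convex hull of a subset of the vertex set `{0,1}^d` of the unit cube. -/
theorem perfect_prismatoid_affine_equiv_01_polytope {d : ℕ}
    (P : Set (EuclideanSpace ℝ (Fin d))) (hP : IsPerfectPrismatoid P) :
    ∃ T : EuclideanSpace ℝ (Fin d) ≃ᵃ[ℝ] EuclideanSpace ℝ (Fin d),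
      ∃ S : Set (EuclideanSpace ℝ (Fin d)),
        S ⊆ {x | ∀ i, x i = 0 ∨ x i = 1} ∧ T '' P = convexHull ℝ S := by
  obtain ⟨⟨S, hPS⟩, hspan, hprism⟩ := hP
  obtain ⟨u, hu⟩ := exists_basis_finrank_vectorSpan_exposedFace_eq
    (EuclideanSpace.basisFun (Fin d) ℝ).toBasis hPS hspan
  choose F' _ hF'ne hpar hPF using fun i =>
    hprism _ ⟨isExposed_exposedFace P (u i), by simpa using hu i⟩
  choose b c hbc hval using fun i => exists_ne_forall_inner_eq_or_eq (u.ne_zero i)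
    (by rw [← affineSpan_convexHull, ← hPF i, hspan])
    (exposedFace_nonempty (hPS ▸ S.finite_toSet.isCompact_convexHull ℝ)
      (AffineSubspace.nonempty_of_affineSpan_eq_top ℝ _ _ hspan) _)
    (hF'ne i) (mem_orthogonal_vectorSpan_exposedFace P _) (hpar i)
  obtain ⟨T, hT⟩ := u.exists_affineEquiv_euclideanSpace hbc
  refine ⟨T, T '' P.extremePoints ℝ, ?_, ?_⟩
  · rintro _ ⟨e, he, rfl⟩ i
    rw [hPF i] at he
    rcases hval i e (extremePoints_convexHull_subset he) with h | h
    · simp [hT, h]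
    · simp [hT, h, sub_ne_zero.2 (hbc i).symm]
  · rw [← T.coe_toAffineMap, ← AffineMap.image_convexHull, hPS,
      convexHull_extremePoints_convexHull_of_finite S.finite_toSet]
end

section
/- Let a ∈ ℝ^d and let b, c be real numbers with c < b. Let v_1, ..., v_k ∈ ℝ^d satisfy ⟨a, v_j⟩ ∈ {b, c} for every j. Then for every point u = n_1 v_1 + ... + n_k v_k with n_j ∈ ℤ and n_1 + ... + n_k = 1, one has (⟨a, u⟩ − b)(⟨a, u⟩ − c) ≥ 0; moreover equality holds if and only if ⟨a, u⟩ = b or ⟨a, u⟩ = c. -/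
open scoped RealInnerProductSpace

/-- If `⟪a, v j⟫ ∈ {b, c}` for all `j` (with `c < b`), then every integer
affine combination `u = ∑ n j • v j` (`n j ∈ ℤ`, `∑ n j = 1`) satisfies
`(⟪a, u⟫ - b) * (⟪a, u⟫ - c) ≥ 0`, with equality iff `⟪a, u⟫ = b` or `⟪a, u⟫ = c`. -/
theorem quadratic_nonneg_on_int_affine_combos {d k : ℕ}
    (a : EuclideanSpace ℝ (Fin d)) (b c : ℝ) (hcb : c < b)
    (v : Fin k → EuclideanSpace ℝ (Fin d))
    (hv : ∀ j, ⟪a, v j⟫ = b ∨ ⟪a, v j⟫ = c)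
    (n : Fin k → ℤ) (hn : (∑ j, n j) = 1)
    (u : EuclideanSpace ℝ (Fin d)) (hu : u = ∑ j, (n j : ℝ) • v j) :
    0 ≤ (⟪a, u⟫ - b) * (⟪a, u⟫ - c) ∧
    ((⟪a, u⟫ - b) * (⟪a, u⟫ - c) = 0 ↔ ⟪a, u⟫ = b ∨ ⟪a, u⟫ = c) := by
  have hx : ⟪a, u⟫ = ∑ j, (n j : ℝ) * ⟪a, v j⟫ := by
    rw [hu, inner_sum]
    simp only [real_inner_smul_right]
  set m : ℤ := ∑ j, n j * (if ⟪a, v j⟫ = b then 1 else 0) with hm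
  have hxm : ⟪a, u⟫ = c + (m : ℝ) * (b - c) := by
    rw [hx, hm]
    push_cast
    rw [Finset.sum_mul]
    have : ∀ j ∈ Finset.univ, (n j : ℝ) * ⟪a, v j⟫ =
        (n j : ℝ) * c + (n j : ℝ) * (if ⟪a, v j⟫ = b then (1:ℝ) else 0) * (b - c) := by
      intro j _
      rcases hv j with h | h
      · rw [h, if_pos rfl]; ring
      · rw [h, if_neg (by linarith)]; ring
    rw [Finset.sum_congr rfl this, Finset.sum_add_distrib, ← Finset.sum_mul,
      ← Finset.sum_mul]
    have : (∑ j, (n j : ℝ)) = 1 := by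
      rw [← Int.cast_sum, hn]; norm_num
    rw [this]; ring
  have hbc : (0:ℝ) < b - c := by linarith
  have key : (⟪a, u⟫ - b) * (⟪a, u⟫ - c) = ((m * (m - 1) : ℤ) : ℝ) * (b - c)^2 := by
    rw [hxm]; push_cast; ring
  have hmm : 0 ≤ m * (m - 1) := by
    rcases le_or_gt m 0 with h | h
    · nlinarith
    · exact mul_nonneg (by omega) (by omega)
  constructor
  · rw [key]
    positivity
  · rw [key]
    constructor
    · intro h
      have h2 : ((m * (m - 1) : ℤ) : ℝ) = 0 :=
        (mul_eq_zero.mp h).resolve_right (by positivity)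
      have h3 : m * (m - 1) = 0 := by exact_mod_cast h2
      rcases mul_eq_zero.mp h3 with h4 | h4
      · right; rw [hxm, h4]; push_cast; ring
      · left; rw [hxm]; have : m = 1 := by omega
        rw [this]; push_cast; ring
    · intro h
      have hm01 : m = 0 ∨ m = 1 := by
        rcases h with h | h
        · right
          have h1 : (m : ℝ) * (b - c) = 1 * (b - c) := by rw [hxm] at h; linarith
          have : (m : ℝ) = 1 := mul_right_cancel₀ (by linarith) h1
          exact_mod_cast this
        · left
          have : (m : ℝ) * (b - c) = 0 := by rw [hxm] at h; linarith
          have : (m : ℝ) = 0 := by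
            rcases mul_eq_zero.mp this with h' | h' <;> [exact h'; linarith]
          exact_mod_cast this
      rcases hm01 with h' | h' <;> rw [h'] <;> norm_num
end

section
/- Let P be a d-dimensional perfect prismatoid in ℝ^d whose vertices v_1, ..., v_k all lie in ℤ^d, described (as in the Proposition) by inequalities c_i ≤ ⟨a_i, x⟩ ≤ b_i, i = 1, ..., N, with c_i < b_i and with every vertex v of P satisfying ⟨a_i, v⟩ ∈ {b_i, c_i} for each i. Let Λ(P) = {n_1 v_1 + ... + n_k v_k : n_j ∈ ℤ, Σ n_j = 1} and Q(x) = Σ_{i=1}^{N} (⟨a_i, x⟩ − b_i)(⟨a_i, x⟩ − c_i). Then Q(u) ≥ 0 for every u ∈ Λ(P), and for u ∈ Λ(P) one has Q(u) = 0 if and only if u is a vertex of P. -/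
open scoped RealInnerProductSpace

/-- The set of integer affine combinations of the points `v 0, ..., v (k-1)`:
integer linear combinations whose coefficients sum to `1`. -/
def intAffineCombos {d k : ℕ} (v : Fin k → EuclideanSpace ℝ (Fin d)) :
    Set (EuclideanSpace ℝ (Fin d)) :=
  {u | ∃ n : Fin k → ℤ, (∑ j, n j) = 1 ∧ u = ∑ j, (n j : ℝ) • v j}

/-!
Each functional `⟪a i, ·⟫` takes only the values `b i` and `c i` at the vertices, so on the
integer affine combinations of the vertices it takes values `t = c i + m (b i - c i)` with
`m ∈ ℤ`, where `(t - b i) (t - c i) = m (m - 1) (b i - c i) ^ 2 ≥ 0`. Equality forces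
`⟪a i, u⟫ ∈ {b i, c i}` for every `i`. Since `P` has a vertex, the map `x ↦ (⟪a i, x⟫)ᵢ` is
injective (a kernel direction would be a line through every point of `P`), so such a `u` is the
preimage of a vertex of the box `∏ i, [c i, b i]`, hence a vertex of `P`.
-/

open Set

section Preimage

variable {𝕜 E F : Type*} [Field 𝕜] [LinearOrder 𝕜] [IsStrictOrderedRing 𝕜]
  [AddCommGroup E] [Module 𝕜 E] [AddCommGroup F] [Module 𝕜 F] {f : E →ₗ[𝕜] F} {s : Set F}

theorem LinearMap.injective_of_mem_extremePoints_preimage {x : E}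
    (hx : x ∈ (f ⁻¹' s).extremePoints 𝕜) : Function.Injective f := by
  refine (injective_iff_map_eq_zero f).2 fun z hz => ?_
  have hplus : x + z ∈ f ⁻¹' s := by simpa [mem_preimage, hz] using hx.1
  have hminus : x - z ∈ f ⁻¹' s := by simpa [mem_preimage, hz] using hx.1
  have hmid : x ∈ openSegment 𝕜 (x + z) (x - z) :=
    ⟨1 / 2, 1 / 2, by norm_num, by norm_num, by norm_num, by module⟩
  simpa using hx.2 hplus hminus hmid

theorem LinearMap.mem_extremePoints_preimage (hf : Function.Injective f) {x : E}
    (hx : f x ∈ s.extremePoints 𝕜) : x ∈ (f ⁻¹' s).extremePoints 𝕜 := by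
  refine ⟨hx.1, fun x₁ hx₁ x₂ hx₂ hseg => hf (hx.2 hx₁ hx₂ ?_)⟩
  exact image_openSegment 𝕜 f.toAffineMap x₁ x₂ ▸ mem_image_of_mem f hseg

end Preimage

section Slabs

variable {ι E : Type*} [NormedAddCommGroup E] [InnerProductSpace ℝ E]

theorem mem_extremePoints_of_forall_inner_eq {P : Set E} {a : ι → E} {b c : ι → ℝ}
    (hP : P = {x | ∀ i, c i ≤ ⟪a i, x⟫ ∧ ⟪a i, x⟫ ≤ b i}) (hcb : ∀ i, c i ≤ b i)
    (hne : (P.extremePoints ℝ).Nonempty) {u : E}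
    (hu : ∀ i, ⟪a i, u⟫ = b i ∨ ⟪a i, u⟫ = c i) : u ∈ P.extremePoints ℝ := by
  let T : E →ₗ[ℝ] ι → ℝ := LinearMap.pi fun i => innerₛₗ ℝ (a i)
  have hPT : P = T ⁻¹' univ.pi fun i => Icc (c i) (b i) := by
    ext x
    simp [hP, T, Pi.le_def, forall_and]
  obtain ⟨w, hw⟩ := hne
  rw [hPT] at hw ⊢
  refine T.mem_extremePoints_preimage (T.injective_of_mem_extremePoints_preimage hw) ?_
  rw [extremePoints_pi]
  intro i _
  simpa [extremePoints_Icc (hcb i), T, or_comm] using hu i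

end Slabs

section IntAffineCombos

variable {d k : ℕ} {v : Fin k → EuclideanSpace ℝ (Fin d)} {u : EuclideanSpace ℝ (Fin d)}

theorem range_nonempty_of_mem_intAffineCombos (hu : u ∈ intAffineCombos v) :
    (range v).Nonempty := by
  obtain ⟨n, hn, -⟩ := hu
  obtain ⟨j, -, -⟩ := Finset.exists_ne_zero_of_sum_ne_zero (hn ▸ one_ne_zero)
  exact ⟨v j, j, rfl⟩

theorem inner_sub_mem_zmultiples_of_mem_intAffineCombos (hu : u ∈ intAffineCombos v)
    {y : EuclideanSpace ℝ (Fin d)} {γ δ : ℝ}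
    (hv : ∀ j, ⟪y, v j⟫ - γ ∈ AddSubgroup.zmultiples δ) :
    ⟪y, u⟫ - γ ∈ AddSubgroup.zmultiples δ := by
  obtain ⟨n, hn, rfl⟩ := hu
  have hn' : ∑ j, (n j : ℝ) = 1 := by exact_mod_cast hn
  have hsum : ⟪y, ∑ j, (n j : ℝ) • v j⟫ - γ = ∑ j, n j • (⟪y, v j⟫ - γ) := by
    simp only [inner_sum, real_inner_smul_right, zsmul_eq_mul, mul_sub, Finset.sum_sub_distrib,
      ← Finset.sum_mul, hn', one_mul]
  rw [hsum]
  exact AddSubgroup.sum_mem _ fun j _ => AddSubgroup.zsmul_mem _ (hv j) _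

end IntAffineCombos

theorem mul_sub_nonneg_of_sub_mem_zmultiples {R : Type*} [CommRing R] [LinearOrder R]
    [IsStrictOrderedRing R] {t β γ : R} (h : t - γ ∈ AddSubgroup.zmultiples (β - γ)) :
    0 ≤ (t - β) * (t - γ) := by
  obtain ⟨m, hm⟩ := AddSubgroup.mem_zmultiples_iff.1 h
  have hm_int : (0 : ℤ) ≤ (m - 1) * m := by nlinarith [Int.le_self_sq m]
  have hm_cast : (0 : R) ≤ ((m : R) - 1) * m := by exact_mod_cast hm_int
  have hfactor : (t - β) * (t - γ) = ((m : R) - 1) * m * (β - γ) ^ 2 := by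
    rw [sub_eq_iff_eq_add.1 hm.symm, zsmul_eq_mul]
    ring
  rw [hfactor]
  exact mul_nonneg hm_cast (sq_nonneg _)

theorem Q_nonneg_on_lattice_and_zero_iff_vertex_general {d N k : ℕ}
    (P : Set (EuclideanSpace ℝ (Fin d)))
    (v : Fin k → EuclideanSpace ℝ (Fin d))
    (hvP : Set.range v = Set.extremePoints ℝ P)
    (a : Fin N → EuclideanSpace ℝ (Fin d)) (b c : Fin N → ℝ)
    (hcb : ∀ i, c i < b i)
    (hdesc : P = {x | ∀ i, c i ≤ ⟪a i, x⟫ ∧ ⟪a i, x⟫ ≤ b i})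
    (hvert : ∀ w ∈ Set.extremePoints ℝ P, ∀ i, ⟪a i, w⟫ = b i ∨ ⟪a i, w⟫ = c i) :
    ∀ u ∈ intAffineCombos v,
      0 ≤ ∑ i, (⟪a i, u⟫ - b i) * (⟪a i, u⟫ - c i) ∧
      ((∑ i, (⟪a i, u⟫ - b i) * (⟪a i, u⟫ - c i)) = 0 ↔ u ∈ Set.extremePoints ℝ P) := by
  intro u hu
  have hv_mem : ∀ i j, ⟪a i, v j⟫ - c i ∈ AddSubgroup.zmultiples (b i - c i) := fun i j => by
    rcases hvert (v j) (hvP ▸ mem_range_self j) i with h | h <;> simp [h]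
  have hterm : ∀ i, 0 ≤ (⟪a i, u⟫ - b i) * (⟪a i, u⟫ - c i) := fun i =>
    mul_sub_nonneg_of_sub_mem_zmultiples
      (inner_sub_mem_zmultiples_of_mem_intAffineCombos hu (hv_mem i))
  refine ⟨Finset.sum_nonneg fun i _ => hterm i, ?_⟩
  rw [Finset.sum_eq_zero_iff_of_nonneg fun i _ => hterm i]
  constructor
  · intro hzero
    have hne : (P.extremePoints ℝ).Nonempty := hvP ▸ range_nonempty_of_mem_intAffineCombos hu
    refine mem_extremePoints_of_forall_inner_eq hdesc (fun i => (hcb i).le) hne fun i => ?_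
    simpa [mul_eq_zero, sub_eq_zero] using hzero i (Finset.mem_univ i)
  · intro hext i _
    rcases hvert u hext i with h | h <;> simp [h]

/-- Let `P` be a perfect prismatoid with integer vertices `v 1, ..., v k`,
described by `c i ≤ ⟪a i, x⟫ ≤ b i` with `c i < b i` and every vertex value in `{b i, c i}`.
Then `Q u = ∑ i, (⟪a i, u⟫ - b i) * (⟪a i, u⟫ - c i)` is nonnegative on the lattice
`Λ(P)` of integer affine combinations of the vertices, and vanishes there exactly at the
vertices of `P`. -/
theorem Q_nonneg_on_lattice_and_zero_iff_vertex {d N k : ℕ}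
    (P : Set (EuclideanSpace ℝ (Fin d))) (hP : IsPerfectPrismatoid P)
    (v : Fin k → EuclideanSpace ℝ (Fin d))
    (hvint : ∀ j i, ∃ m : ℤ, v j i = (m : ℝ))
    (hvP : Set.range v = Set.extremePoints ℝ P)
    (a : Fin N → EuclideanSpace ℝ (Fin d)) (b c : Fin N → ℝ)
    (hcb : ∀ i, c i < b i)
    (hdesc : P = {x | ∀ i, c i ≤ ⟪a i, x⟫ ∧ ⟪a i, x⟫ ≤ b i})
    (hvert : ∀ w ∈ Set.extremePoints ℝ P, ∀ i, ⟪a i, w⟫ = b i ∨ ⟪a i, w⟫ = c i) :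
    ∀ u ∈ intAffineCombos v,
      0 ≤ ∑ i, (⟪a i, u⟫ - b i) * (⟪a i, u⟫ - c i) ∧
      ((∑ i, (⟪a i, u⟫ - b i) * (⟪a i, u⟫ - c i)) = 0 ↔ u ∈ Set.extremePoints ℝ P) :=
  Q_nonneg_on_lattice_and_zero_iff_vertex_general P v hvP a b c hcb hdesc hvert
end

section
/- Let P be a d-dimensional perfect prismatoid in ℝ^d whose vertices all lie in ℤ^d, described by inequalities c_i ≤ ⟨a_i, x⟩ ≤ b_i, i = 1, ..., N, with c_i < b_i and with every vertex v of P satisfying ⟨a_i, v⟩ ∈ {b_i, c_i} for each i, and let Q(x) = Σ_{i=1}^{N} (⟨a_i, x⟩ − b_i)(⟨a_i, x⟩ − c_i). Then the set E = {x ∈ ℝ^d : Q(x) = 0} is an ellipsoid (the zero set of a quadratic function with positive definite quadratic part) that passes through every vertex of P, and the open region {x : Q(x) < 0} enclosed by E contains no point of the lattice Λ(P) of integer affine combinations of the vertices of P. -/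
open scoped RealInnerProductSpace

/-! Positive definiteness: if all `⟪a i, x⟫` vanished, the nonempty polytope `P` would contain a
whole line in direction `x`, contradicting boundedness. Emptiness: every vertex takes only the two
values `b i`, `c i` under `⟪a i, ·⟫`, so at an integer affine combination of vertices it takes the
value `c i + m (b i - c i)` with `m ∈ ℤ`, where each summand of `Q` equals
`m (m - 1) (b i - c i) ^ 2 ≥ 0`. -/

open Bornology

theorem IsPolytope.isBounded {d : ℕ} {P : Set (EuclideanSpace ℝ (Fin d))} (hP : IsPolytope P) :
    IsBounded P := by
  obtain ⟨S, rfl⟩ := hP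
  exact isBounded_convexHull.2 S.finite_toSet.isBounded

theorem IsPerfectPrismatoid.nonempty {d : ℕ} {P : Set (EuclideanSpace ℝ (Fin d))}
    (hP : IsPerfectPrismatoid P) : P.Nonempty := by
  rw [← affineSpan_nonempty (k := ℝ), hP.2.1]
  exact ⟨0, AffineSubspace.mem_top ℝ _ 0⟩

theorem eq_zero_of_forall_add_smul_mem {E : Type*} [NormedAddCommGroup E] [NormedSpace ℝ E]
    {S : Set E} (hS : IsBounded S) {p x : E} (hline : ∀ t : ℝ, p + t • x ∈ S) : x = 0 := by
  by_contra hx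
  obtain ⟨R, hR⟩ := hS.exists_norm_le
  have hpR : ‖p‖ ≤ R := by simpa using hR _ (hline 0)
  have hxpos : 0 < ‖x‖ := norm_pos_iff.2 hx
  set t := (2 * R + 1) / ‖x‖
  have hfar : ‖t • x‖ = 2 * R + 1 := by
    rw [norm_smul, Real.norm_of_nonneg (div_nonneg (by linarith [norm_nonneg p]) hxpos.le),
      div_mul_cancel₀ _ hxpos.ne']
  have hnear : ‖t • x‖ ≤ 2 * R :=
    calc ‖t • x‖ = ‖(p + t • x) - p‖ := by rw [add_sub_cancel_left]
      _ ≤ ‖p + t • x‖ + ‖p‖ := norm_sub_le _ _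
      _ ≤ 2 * R := by linarith [hR _ (hline t)]
  linarith

theorem sum_inner_sq_pos_of_isBounded {E ι : Type*} [NormedAddCommGroup E]
    [InnerProductSpace ℝ E] [Fintype ι] {a : ι → E} {b c : ι → ℝ}
    (hbdd : IsBounded {x | ∀ i, c i ≤ ⟪a i, x⟫ ∧ ⟪a i, x⟫ ≤ b i})
    (hne : {x | ∀ i, c i ≤ ⟪a i, x⟫ ∧ ⟪a i, x⟫ ≤ b i}.Nonempty) {x : E} (hx : x ≠ 0) :
    0 < ∑ i, ⟪a i, x⟫ ^ 2 := by
  obtain ⟨p, hp⟩ := hne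
  obtain ⟨i, hi⟩ : ∃ i, ⟪a i, x⟫ ≠ 0 := by
    by_contra! h
    refine hx (eq_zero_of_forall_add_smul_mem (p := p) hbdd fun t => ?_)
    simpa [inner_add_right, inner_smul_right, h] using hp
  exact Finset.sum_pos' (fun _ _ => sq_nonneg _) ⟨i, Finset.mem_univ _, by positivity⟩

theorem LinearMap.exists_int_apply_sum_of_two_valued {ι E : Type*} [Fintype ι] [AddCommGroup E]
    [Module ℝ E] (f : E →ₗ[ℝ] ℝ) {v : ι → E} {β γ : ℝ}
    (hv : ∀ j, f (v j) = β ∨ f (v j) = γ) {n : ι → ℤ} (hn : ∑ j, n j = 1) :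
    ∃ m : ℤ, f (∑ j, (n j : ℝ) • v j) = γ + m * (β - γ) := by
  obtain ⟨e, he⟩ : ∃ e : ι → ℤ, ∀ j, f (v j) = γ + e j * (β - γ) := by
    refine ⟨fun j => if f (v j) = γ then 0 else 1, fun j => ?_⟩
    rcases hv j with h | h <;> by_cases h' : f (v j) = γ <;> simp_all
  have hn' : ∑ j, (n j : ℝ) = 1 := by exact_mod_cast hn
  refine ⟨∑ j, n j * e j, ?_⟩
  simp only [map_sum, map_smul, smul_eq_mul, he, mul_add, ← mul_assoc, Finset.sum_add_distrib,
    ← Finset.sum_mul, hn']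
  push_cast
  ring

theorem sub_mul_sub_nonneg_of_int (m : ℤ) (β γ : ℝ) :
    0 ≤ (γ + m * (β - γ) - β) * (γ + m * (β - γ) - γ) := by
  have hm : (0 : ℝ) ≤ m * (m - 1) := by
    have : (0 : ℤ) ≤ m * (m - 1) := by rcases le_or_gt m 0 with h | h <;> nlinarith
    exact_mod_cast this
  calc (0 : ℝ) ≤ m * (m - 1) * (β - γ) ^ 2 := mul_nonneg hm (sq_nonneg _)
    _ = _ := by ring

theorem empty_ellipsoid_through_vertices_general {d N k : ℕ}
    (P : Set (EuclideanSpace ℝ (Fin d))) (hP : IsPerfectPrismatoid P)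
    (v : Fin k → EuclideanSpace ℝ (Fin d))
    (hvP : Set.range v = Set.extremePoints ℝ P)
    (a : Fin N → EuclideanSpace ℝ (Fin d)) (b c : Fin N → ℝ)
    (hdesc : P = {x | ∀ i, c i ≤ ⟪a i, x⟫ ∧ ⟪a i, x⟫ ≤ b i})
    (hvert : ∀ w ∈ Set.extremePoints ℝ P, ∀ i, ⟪a i, w⟫ = b i ∨ ⟪a i, w⟫ = c i) :
    (∀ x : EuclideanSpace ℝ (Fin d), x ≠ 0 → 0 < ∑ i, ⟪a i, x⟫ ^ 2) ∧
    (∀ w ∈ Set.extremePoints ℝ P,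
      (∑ i, (⟪a i, w⟫ - b i) * (⟪a i, w⟫ - c i)) = 0) ∧
    (∀ u ∈ intAffineCombos v,
      ¬ (∑ i, (⟪a i, u⟫ - b i) * (⟪a i, u⟫ - c i)) < 0) := by
  refine ⟨fun x hx =>
    sum_inner_sq_pos_of_isBounded (hdesc ▸ hP.1.isBounded) (hdesc ▸ hP.nonempty) hx,
    fun w hw => ?_, ?_⟩
  · refine Finset.sum_eq_zero fun i _ => ?_
    rcases hvert w hw i with h | h <;> simp [h]
  · rintro u ⟨n, hn, rfl⟩
    refine not_lt.2 (Finset.sum_nonneg fun i _ => ?_)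
    obtain ⟨m, hm⟩ := (innerₛₗ ℝ (a i)).exists_int_apply_sum_of_two_valued
      (fun j => hvert _ (hvP ▸ Set.mem_range_self j) i) hn
    rw [innerₛₗ_apply_apply] at hm
    rw [hm]
    exact sub_mul_sub_nonneg_of_int m _ _

/-- In the setting of the Proposition (perfect prismatoid with integer
vertices, described by `c i ≤ ⟪a i, x⟫ ≤ b i` with vertex values in `{b i, c i}`), the set
`E = {x | Q x = 0}` with `Q x = ∑ i, (⟪a i, x⟫ - b i) * (⟪a i, x⟫ - c i)` is an ellipsoid:
the quadratic part `x ↦ ∑ i, ⟪a i, x⟫ ^ 2` of `Q` is positive definite, `E` passes through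
every vertex of `P`, and the open region `{x | Q x < 0}` contains no point of the lattice
`Λ(P)` of integer affine combinations of the vertices of `P`. -/
theorem empty_ellipsoid_through_vertices {d N k : ℕ}
    (P : Set (EuclideanSpace ℝ (Fin d))) (hP : IsPerfectPrismatoid P)
    (v : Fin k → EuclideanSpace ℝ (Fin d))
    (hvint : ∀ j i, ∃ m : ℤ, v j i = (m : ℝ))
    (hvP : Set.range v = Set.extremePoints ℝ P)
    (a : Fin N → EuclideanSpace ℝ (Fin d)) (b c : Fin N → ℝ)
    (hcb : ∀ i, c i < b i)
    (hdesc : P = {x | ∀ i, c i ≤ ⟪a i, x⟫ ∧ ⟪a i, x⟫ ≤ b i})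
    (hvert : ∀ w ∈ Set.extremePoints ℝ P, ∀ i, ⟪a i, w⟫ = b i ∨ ⟪a i, w⟫ = c i) :
    (∀ x : EuclideanSpace ℝ (Fin d), x ≠ 0 → 0 < ∑ i, ⟪a i, x⟫ ^ 2) ∧
    (∀ w ∈ Set.extremePoints ℝ P,
      (∑ i, (⟪a i, w⟫ - b i) * (⟪a i, w⟫ - c i)) = 0) ∧
    (∀ u ∈ intAffineCombos v,
      ¬ (∑ i, (⟪a i, u⟫ - b i) * (⟪a i, u⟫ - c i)) < 0) :=
  empty_ellipsoid_through_vertices_general P hP v hvP a b c hdesc hvert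
end
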